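/- arXiv:1607.08717 — 2 statements merged into one kernel-verified Lean document; each statement's English description precedes it below -/
import Mathlib

section
/- Let D := {(x̄, x̃) ∈ ℝ² : x̃ ≥ x̄²}. Let b(x̄, x̃) = (b̄⁰ + b̄¹x̄ + b̄²x̃, b̃⁰ + b̃¹x̄ + b̃²x̃) be affine and let C : ℝ² → S² be affine, C(x̄, x̃) = A⁰ + A¹x̄ + A²x̃ with A⁰, A¹, A² ∈ S². Then the following are equivalent. (I) C(x) is positive semidefinite for every x ∈ D, and for every x̄ ∈ ℝ, with x := (x̄, x̄²) and w := (−2x̄, 1): C(x)w = 0 and ⟨w, b(x)⟩ − (𝟙_{C₁₁(x) ≠ 0} / (2(1 + 4x̄²))) · ( −2x̄ ∂_w(C₁₁ − C₂₂)(x) + (1 − 4x̄²) ∂_w C₁₂(x) ) ≥ 0, where ∂_w := ∂₁ + 2x̄ ∂₂. (II) There exists α ≥ 0 such that C(x̄, x̃) = α·[[1, 2x̄], [2x̄, 4x̃]] for all (x̄, x̃) ∈ ℝ², b̄² = 0, and either [b̃² > 2b̄¹ and (b̃¹ − 2b̄⁰)² ≤ 4(b̃² − 2b̄¹)(b̃⁰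 − α)] or [b̃² = 2b̄¹, b̃¹ = 2b̄⁰ and b̃⁰ ≥ α]. -/
open Matrix Set Asymptotics
open scoped RealInnerProductSpace NNReal

noncomputable section

/-- `ℝ^d` with the Euclidean inner product and norm. -/
abbrev Vec (d : ℕ) := EuclideanSpace ℝ (Fin d)

/-- real `d × d` matrices. -/
abbrev Mat (d : ℕ) := Matrix (Fin d) (Fin d) ℝ

attribute [local instance] Matrix.normedAddCommGroup Matrix.normedSpace

/-- A matrix acting on a vector of `ℝ^d`. -/
def mv {d : ℕ} (A : Mat d) (u : Vec d) : Vec d := WithLp.toLp 2 (A.mulVec u)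

/-- The `j`-th canonical basis vector of `ℝ^d`. -/
def evec {d : ℕ} (j : Fin d) : Vec d := EuclideanSpace.single j 1

/-- The first-order normal cone `N¹_D(x)`. -/
def normalCone1 {d : ℕ} (D : Set (Vec d)) (x : Vec d) : Set (Vec d) :=
  {u | ∀ ε > (0:ℝ), ∃ δ > (0:ℝ), ∀ y ∈ D, ‖y - x‖ ≤ δ → ⟪u, y - x⟫ ≤ ε * ‖y - x‖}

/-- The second-order normal cone `N²_D(x) ⊆ ℝ^d × S^d`. -/
def normalCone2 {d : ℕ} (D : Set (Vec d)) (x : Vec d) : Set (Vec d × Mat d) :=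
  {p | p.2.IsSymm ∧ ∀ ε > (0:ℝ), ∃ δ > (0:ℝ), ∀ y ∈ D, ‖y - x‖ ≤ δ →
    ⟪p.1, y - x⟫ + (1/2:ℝ) * ⟪y - x, mv p.2 (y - x)⟫ ≤ ε * ‖y - x‖^2}

/-- The first-order normal cone for subsets of `ℝ`. -/
def normalConeR (D : Set ℝ) (x : ℝ) : Set ℝ :=
  {u | ∀ ε > (0:ℝ), ∃ δ > (0:ℝ), ∀ y ∈ D, |y - x| ≤ δ → u * (y - x) ≤ ε * |y - x|}

/-- The matrix of the orthogonal projection of `ℝ^d` onto the column space (range) of `A`,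
i.e. `A A⁺` with `A⁺` the Moore–Penrose pseudoinverse. -/
def projRange {d : ℕ} (A : Mat d) : Mat d :=
  Matrix.toEuclideanLin.symm
    (((LinearMap.range (Matrix.toEuclideanLin A)).subtypeL.comp
      (Submodule.orthogonalProjection (LinearMap.range (Matrix.toEuclideanLin A)))).toLinearMap)

/-- The element of `ℝ²` with the two given coordinates. -/
def vec2 (a b : ℝ) : Vec 2 := WithLp.toLp 2 ![a, b]

/-- The Hessian matrix of `φ : ℝ^d → ℝ` at `x`. -/
def hessMat {d : ℕ} (φ : Vec d → ℝ) (x : Vec d) : Mat d :=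
  Matrix.of fun i j => fderiv ℝ (fun y => fderiv ℝ φ y (evec j)) x (evec i)

/-!
On the boundary parabola `x̃ = x̄²` every condition of (I) is a polynomial identity or inequality
in `x̄`. The kernel condition `C(x) w = 0` consists of two cubic identities, whose coefficients force
`C = α • [[1, 2x̄], [2x̄, 4x̃]]` with `α = A⁰₁₁`; positive semidefiniteness at `(0, 1)` gives `α ≥ 0`.
For such `C` the second-order correction in the drift condition is exactly `α`, so the drift
condition says that the cubic `-2b̄² x̄³ + (b̃² - 2b̄¹) x̄² + (b̃¹ - 2b̄⁰) x̄ + (b̃⁰ - α)` is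
nonnegative on `ℝ`. Its leading coefficient must vanish, and the discriminant criterion for the
remaining quadratic gives (II). Conversely `[[1, 2x̄], [2x̄, 4x̃]]` is
`(1, 2x̄)(1, 2x̄)ᵀ + diag(0, 4(x̃ - x̄²))`, positive semidefinite on `D`.
-/

open Filter Topology

@[simp] lemma vec2_apply_zero (a b : ℝ) : vec2 a b 0 = a := rfl

@[simp] lemma vec2_apply_one (a b : ℝ) : vec2 a b 1 = b := rfl

lemma cubic_coeffs_eq_zero {a b c d : ℝ} (h : ∀ x : ℝ, a * x ^ 3 + b * x ^ 2 + c * x + d = 0) :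
    a = 0 ∧ b = 0 ∧ c = 0 ∧ d = 0 := by
  have h₀ := h 0
  have h₁ := h 1
  have h₂ := h (-1)
  have h₃ := h 2
  norm_num at h₀ h₁ h₂ h₃
  exact ⟨by linarith, by linarith, by linarith, by linarith⟩

lemma cubic_coeff_eq_zero_of_nonneg {a b c d : ℝ}
    (h : ∀ x : ℝ, 0 ≤ a * x ^ 3 + b * x ^ 2 + c * x + d) : a = 0 := by
  -- `a` is the limit of `(a x³ + b x² + c x + d) / x³` at both ends of `ℝ`
  set g : ℝ → ℝ := fun y => a + b * y + c * y ^ 2 + d * y ^ 3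
  have hg : Continuous g := by fun_prop
  have hg_inv : ∀ x ≠ 0, g x⁻¹ = (a * x ^ 3 + b * x ^ 2 + c * x + d) / x ^ 3 := by
    intro x hx
    simp only [g]
    field_simp
  have hg0 : g 0 = a := by simp [g]
  have htop : Tendsto (fun x => g x⁻¹) atTop (𝓝 a) :=
    hg0 ▸ (hg.tendsto 0).comp tendsto_inv_atTop_zero
  have hbot : Tendsto (fun x => g x⁻¹) atBot (𝓝 a) :=
    hg0 ▸ (hg.tendsto 0).comp tendsto_inv_atBot_zero
  have ha_nonneg : 0 ≤ a := ge_of_tendsto htop <| by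
    filter_upwards [eventually_gt_atTop 0] with x hx
    rw [hg_inv x hx.ne']
    exact div_nonneg (h x) (by positivity)
  have ha_nonpos : a ≤ 0 := le_of_tendsto hbot <| by
    filter_upwards [eventually_lt_atBot 0] with x hx
    rw [hg_inv x hx.ne]
    exact div_nonpos_of_nonneg_of_nonpos (h x) (Odd.pow_nonpos (by decide) hx.le)
  exact le_antisymm ha_nonpos ha_nonneg

lemma forall_cubic_nonneg_iff {a b c d : ℝ} :
    (∀ x : ℝ, 0 ≤ a * x ^ 3 + b * x ^ 2 + c * x + d) ↔
      a = 0 ∧ ∀ x : ℝ, 0 ≤ b * x ^ 2 + c * x + d := by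
  constructor
  · intro h
    obtain rfl := cubic_coeff_eq_zero_of_nonneg h
    exact ⟨rfl, by simpa using h⟩
  · rintro ⟨rfl, h⟩ x
    simpa using h x

lemma forall_quadratic_nonneg_iff {a b c : ℝ} :
    (∀ x : ℝ, 0 ≤ a * x ^ 2 + b * x + c) ↔
      (0 < a ∧ b ^ 2 ≤ 4 * a * c) ∨ (a = 0 ∧ b = 0 ∧ 0 ≤ c) := by
  constructor
  · intro h
    have hdisc : b ^ 2 ≤ 4 * a * c := by
      have := discrim_le_zero fun x => by simpa only [sq] using h x
      rw [discrim] at this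
      linarith
    have h₀ := h 0
    have h₁ := h 1
    have h₂ := h (-1)
    norm_num at h₀ h₁ h₂
    rcases lt_trichotomy a 0 with ha | rfl | ha
    · nlinarith [sq_nonneg b]
    · exact Or.inr ⟨rfl, by nlinarith, h₀⟩
    · exact Or.inl ⟨ha, hdisc⟩
  · rintro (⟨ha, hdisc⟩ | ⟨rfl, rfl, hc⟩) x
    · nlinarith [sq_nonneg (2 * a * x + b)]
    · simpa using hc

lemma fderiv_affine_apply (c₀ c₁ c₂ : ℝ) (x v : Vec 2) :
    fderiv ℝ (fun y : Vec 2 => c₀ + c₁ * y 0 + c₂ * y 1) x v = c₁ * v 0 + c₂ * v 1 := by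
  let L : Vec 2 →L[ℝ] ℝ := c₁ • EuclideanSpace.proj 0 + c₂ • EuclideanSpace.proj 1
  have hL : (fun y : Vec 2 => c₀ + c₁ * y 0 + c₂ * y 1) = fun y => c₀ + L y := by
    funext y
    simp only [L, add_assoc, _root_.add_apply, _root_.smul_apply,
      PiLp.proj_apply, smul_eq_mul]
  rw [hL, fderiv_const_add, L.fderiv]
  simp only [L, _root_.add_apply, _root_.smul_apply, PiLp.proj_apply,
    smul_eq_mul]

lemma posSemidef_parabola {x y : ℝ} (hxy : x ^ 2 ≤ y) :
    (!![1, 2 * x; 2 * x, 4 * y] : Mat 2).PosSemidef := by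
  refine Matrix.PosSemidef.of_dotProduct_mulVec_nonneg ?_ fun v => ?_
  · ext i j
    fin_cases i <;> fin_cases j <;> simp
  · have hquad : star v ⬝ᵥ (!![1, 2 * x; 2 * x, 4 * y] *ᵥ v)
        = (v 0 + 2 * x * v 1) ^ 2 + 4 * (y - x ^ 2) * v 1 ^ 2 := by
      simp [dotProduct, Matrix.mulVec, Fin.sum_univ_two]
      ring
    rw [hquad]
    nlinarith [sq_nonneg (v 0 + 2 * x * v 1), sq_nonneg (v 1)]

lemma mv_smul_parabola_normal (α x : ℝ) :
    mv (α • !![1, 2 * x; 2 * x, 4 * x ^ 2]) (vec2 (-2 * x) 1) = 0 := by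
  ext i
  fin_cases i <;> simp [mv, vec2] <;> ring

lemma eq_smul_parabola_of_mv_normal_eq_zero {A0 A1 A2 : Mat 2}
    (hA0 : A0.IsSymm) (hA1 : A1.IsSymm) (hA2 : A2.IsSymm)
    {C : Vec 2 → Mat 2} (hC : ∀ p : Vec 2, C p = A0 + p 0 • A1 + p 1 • A2)
    (h : ∀ x : ℝ, mv (C (vec2 x (x ^ 2))) (vec2 (-2 * x) 1) = 0) :
    ∀ p : Vec 2, C p = A0 0 0 • !![1, 2 * p 0; 2 * p 0, 4 * p 1] := by
  have row₀ : ∀ x : ℝ, (-2 * A2 0 0) * x ^ 3 + (A2 0 1 - 2 * A1 0 0) * x ^ 2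
      + (A1 0 1 - 2 * A0 0 0) * x + A0 0 1 = 0 := by
    intro x
    have := congrArg (· 0) (h x)
    simp [hC, mv, vec2] at this
    linear_combination this
  have row₁ : ∀ x : ℝ, (-2 * A2 0 1) * x ^ 3 + (A2 1 1 - 2 * A1 0 1) * x ^ 2
      + (A1 1 1 - 2 * A0 0 1) * x + A0 1 1 = 0 := by
    intro x
    have := congrArg (· 1) (h x)
    simp [hC, mv, vec2, hA0.apply 0 1, hA1.apply 0 1, hA2.apply 0 1] at this
    linear_combination this
  obtain ⟨h₁, h₂, h₃, h₄⟩ := cubic_coeffs_eq_zero row₀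
  obtain ⟨h₅, h₆, h₇, h₈⟩ := cubic_coeffs_eq_zero row₁
  have e₁ : A2 0 0 = 0 := by linarith
  have e₂ : A2 0 1 = 0 := by linarith
  have e₃ : A1 0 0 = 0 := by linarith
  have e₄ : A1 0 1 = 2 * A0 0 0 := by linarith
  have e₅ : A1 1 1 = 0 := by linarith
  have e₆ : A2 1 1 = 4 * A0 0 0 := by linarith
  intro p
  ext i j
  fin_cases i <;> fin_cases j <;>
    simp [hC, hA0.apply 0 1, hA1.apply 0 1, hA2.apply 0 1, e₁, e₂, e₃, e₄, e₅, e₆, h₄, h₈] <;> ring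

lemma boundary_drift_eq {bb0 bb1 bb2 bt0 bt1 bt2 α : ℝ} {b : Vec 2 → Vec 2} {C : Vec 2 → Mat 2}
    (hb : ∀ p : Vec 2, b p = vec2 (bb0 + bb1 * p 0 + bb2 * p 1) (bt0 + bt1 * p 0 + bt2 * p 1))
    (hC : ∀ p : Vec 2, C p = α • !![1, 2 * p 0; 2 * p 0, 4 * p 1]) (xb : ℝ) :
    ⟪vec2 (-2*xb) 1, b (vec2 xb (xb^2))⟫ -
        (if C (vec2 xb (xb^2)) 0 0 ≠ 0 then (1:ℝ) else 0) / (2 * (1 + 4*xb^2)) *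
          ((-2*xb) *
            (fderiv ℝ (fun y => C y 0 0 - C y 1 1) (vec2 xb (xb^2)) (evec 0) +
             2*xb * fderiv ℝ (fun y => C y 0 0 - C y 1 1) (vec2 xb (xb^2)) (evec 1)) +
           (1 - 4*xb^2) *
            (fderiv ℝ (fun y => C y 0 1) (vec2 xb (xb^2)) (evec 0) +
             2*xb * fderiv ℝ (fun y => C y 0 1) (vec2 xb (xb^2)) (evec 1)))
      = -(2 * bb2) * xb ^ 3 + (bt2 - 2 * bb1) * xb ^ 2 + (bt1 - 2 * bb0) * xb + (bt0 - α) := by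
  have hdiag : (fun y : Vec 2 => C y 0 0 - C y 1 1) = fun y => α + 0 * y 0 + (-4 * α) * y 1 := by
    funext y
    simp [hC]
    ring
  have hoff : (fun y : Vec 2 => C y 0 1) = fun y => 0 + (2 * α) * y 0 + 0 * y 1 := by
    funext y
    simp [hC]
    ring
  have hinner : ⟪vec2 (-2*xb) 1, b (vec2 xb (xb^2))⟫
      = -2 * xb * (bb0 + bb1 * xb + bb2 * xb ^ 2) + (bt0 + bt1 * xb + bt2 * xb ^ 2) := by
    simp [hb, vec2, PiLp.inner_apply, Fin.sum_univ_two]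
    ring
  have hC00 : C (vec2 xb (xb^2)) 0 0 = α := by simp [hC]
  rw [hdiag, hoff, hinner, hC00]
  simp only [fderiv_affine_apply, evec, PiLp.single_apply, Fin.isValue, Fin.reduceEq, if_true,
    if_false, ne_eq]
  -- the bracket equals `2α(1 + 4xb²)`, so the correction term is `α` whether or not `α = 0`
  rcases eq_or_ne α 0 with rfl | hα
  · simp only [not_true_eq_false, if_false, zero_div, zero_mul, sub_zero]
    ring
  · rw [if_pos hα]
    field_simp
    ring

/-- characterization of the invariance conditions for affine diffusions on the
convex parabolic state space `D = {x̃ ≥ x̄²}`. -/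
theorem stmt9 (bb0 bb1 bb2 bt0 bt1 bt2 : ℝ) (A0 A1 A2 : Mat 2)
    (hA0 : A0.IsSymm) (hA1 : A1.IsSymm) (hA2 : A2.IsSymm)
    (b : Vec 2 → Vec 2)
    (hb : ∀ p : Vec 2, b p = vec2 (bb0 + bb1 * p 0 + bb2 * p 1) (bt0 + bt1 * p 0 + bt2 * p 1))
    (C : Vec 2 → Mat 2) (hC : ∀ p : Vec 2, C p = A0 + p 0 • A1 + p 1 • A2)
    (D : Set (Vec 2)) (hD : D = {p : Vec 2 | (p 0)^2 ≤ p 1}) :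
    ((∀ p ∈ D, (C p).PosSemidef) ∧
      ∀ xb : ℝ,
        mv (C (vec2 xb (xb^2))) (vec2 (-2*xb) 1) = 0 ∧
        0 ≤ ⟪vec2 (-2*xb) 1, b (vec2 xb (xb^2))⟫ -
          (if C (vec2 xb (xb^2)) 0 0 ≠ 0 then (1:ℝ) else 0) / (2 * (1 + 4*xb^2)) *
            ((-2*xb) *
              (fderiv ℝ (fun y => C y 0 0 - C y 1 1) (vec2 xb (xb^2)) (evec 0) +
               2*xb * fderiv ℝ (fun y => C y 0 0 - C y 1 1) (vec2 xb (xb^2)) (evec 1)) +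
             (1 - 4*xb^2) *
              (fderiv ℝ (fun y => C y 0 1) (vec2 xb (xb^2)) (evec 0) +
               2*xb * fderiv ℝ (fun y => C y 0 1) (vec2 xb (xb^2)) (evec 1))))
    ↔
    (∃ α : ℝ, 0 ≤ α ∧
      (∀ p : Vec 2, C p = α • !![1, 2 * p 0; 2 * p 0, 4 * p 1]) ∧ bb2 = 0 ∧
      ((2*bb1 < bt2 ∧ (bt1 - 2*bb0)^2 ≤ 4*(bt2 - 2*bb1)*(bt0 - α)) ∨
       (bt2 = 2*bb1 ∧ bt1 = 2*bb0 ∧ α ≤ bt0))) := by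
  have hquad : ∀ α : ℝ, ((2*bb1 < bt2 ∧ (bt1 - 2*bb0)^2 ≤ 4*(bt2 - 2*bb1)*(bt0 - α)) ∨
      (bt2 = 2*bb1 ∧ bt1 = 2*bb0 ∧ α ≤ bt0)) ↔
      ∀ x : ℝ, 0 ≤ (bt2 - 2 * bb1) * x ^ 2 + (bt1 - 2 * bb0) * x + (bt0 - α) := fun α => by
    rw [forall_quadratic_nonneg_iff, sub_pos, sub_eq_zero, sub_eq_zero, sub_nonneg]
  constructor
  · rintro ⟨hpsd, hboundary⟩
    have hCα := eq_smul_parabola_of_mv_normal_eq_zero hA0 hA1 hA2 hC fun x => (hboundary x).1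
    have hα : 0 ≤ A0 0 0 := by
      simpa [hCα] using (hpsd (vec2 0 1) (by simp [hD])).diag_nonneg (i := 0)
    obtain ⟨hbb2, hq⟩ := forall_cubic_nonneg_iff.1 fun x =>
      boundary_drift_eq hb hCα x ▸ (hboundary x).2
    exact ⟨A0 0 0, hα, hCα, by linarith, (hquad _).2 hq⟩
  · rintro ⟨α, hα, hCα, hbb2, hcond⟩
    refine ⟨fun p hp => ?_, fun x => ⟨?_, ?_⟩⟩
    · rw [hCα]
      exact (posSemidef_parabola (by simpa [hD] using hp)).smul hα
    · simpa [hCα] using mv_smul_parabola_normal α x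
    · rw [boundary_drift_eq hb hCα]
      exact forall_cubic_nonneg_iff.2 ⟨by simp [hbb2], (hquad α).1 hcond⟩ x
end
end

section
/- Let D := [0, 1] ⊆ ℝ, let b(x) = b⁰ + b¹x be affine, and let C : ℝ → ℝ be a polynomial of degree at most 2 with C(x) ≥ 0 for all x ∈ [0, 1]. Then the first-order conditions [for every x ∈ [0,1] and every u ∈ N¹_{[0,1]}(x): C(x)u = 0 and u·(b(x) − ½ C′(x)·𝟙_{C(x) ≠ 0}) ≤ 0] hold if and only if there exist η ≥ 0, κ ≥ 0 and θ ∈ [0, 1] such that C(x) = η² x(1 − x) for all x ∈ ℝ and b(x) = κ(θ − x) for all x ∈ ℝ. -/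
open Matrix Set Asymptotics
open scoped RealInnerProductSpace NNReal

noncomputable section

attribute [local instance] Matrix.normedAddCommGroup Matrix.normedSpace

/-! For a convex set the first-order normal cone is the ordinary normal cone
`{u | u (y - x) ≤ 0 for all y ∈ D}`; on `[0,1]` it is `{0}` inside and a half-line at either
endpoint. The conditions thus only bite at the endpoints: `C u = 0` forces `C(0) = C(1) = 0`,
which switches the correction term off there, and what remains says that `b` points inward,
`b(0) ≥ 0 ≥ b(1)`. A quadratic vanishing at `0` and `1` is `c x (1 - x)`, with `c ≥ 0` by
positivity at `1/2`; an affine `b` pointing inward at both endpoints is `κ (θ - x)`. -/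

theorem mem_normalConeR_of_forall_mul_sub_nonpos {D : Set ℝ} {x u : ℝ}
    (h : ∀ y ∈ D, u * (y - x) ≤ 0) : u ∈ normalConeR D x :=
  fun ε hε => ⟨1, one_pos, fun y hy _ => (h y hy).trans (by positivity)⟩

theorem mul_sub_nonpos_of_mem_normalConeR {D : Set ℝ} (hD : Convex ℝ D) {x y u : ℝ}
    (hx : x ∈ D) (hy : y ∈ D) (hu : u ∈ normalConeR D x) : u * (y - x) ≤ 0 := by
  by_contra! hpos
  have hd : 0 < |y - x| := abs_pos.2 fun h => by simp [h] at hpos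
  obtain ⟨δ, hδ, hball⟩ := hu (u * (y - x) / (2 * |y - x|)) (by positivity)
  -- step from `x` towards `y`, far enough to stay inside `D` and within distance `δ`
  set t := min 1 (δ / |y - x|)
  have ht : 0 < t := lt_min one_pos (by positivity)
  have htδ : t * |y - x| ≤ δ := (le_div_iff₀ hd).1 (min_le_right _ _)
  have hz := hball (x + t • (y - x)) (hD.add_smul_sub_mem hx hy ⟨ht.le, min_le_left _ _⟩)
  simp only [smul_eq_mul, add_sub_cancel_left, abs_mul, abs_of_pos ht] at hz
  have key : t * (u * (y - x)) ≤ t * (u * (y - x)) / 2 := by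
    calc t * (u * (y - x)) = u * (t * (y - x)) := by ring
      _ ≤ u * (y - x) / (2 * |y - x|) * (t * |y - x|) := hz htδ
      _ = t * (u * (y - x)) / 2 := by field_simp
  nlinarith [mul_pos ht hpos]

theorem normalConeR_eq_of_convex {D : Set ℝ} (hD : Convex ℝ D) {x : ℝ} (hx : x ∈ D) :
    normalConeR D x = {u | ∀ y ∈ D, u * (y - x) ≤ 0} :=
  Set.ext fun _ => ⟨fun hu _ hy => mul_sub_nonpos_of_mem_normalConeR hD hx hy hu,
    mem_normalConeR_of_forall_mul_sub_nonpos⟩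

section Icc

variable {a b : ℝ}

theorem normalConeR_Icc_left (hab : a < b) : normalConeR (Icc a b) a = Iic 0 := by
  rw [normalConeR_eq_of_convex (convex_Icc a b) (left_mem_Icc.2 hab.le)]
  ext u
  exact ⟨fun h => nonpos_of_mul_nonpos_left (h b (right_mem_Icc.2 hab.le)) (sub_pos.2 hab),
    fun hu _ hy => mul_nonpos_of_nonpos_of_nonneg hu (sub_nonneg.2 hy.1)⟩

theorem normalConeR_Icc_right (hab : a < b) : normalConeR (Icc a b) b = Ici 0 := by
  rw [normalConeR_eq_of_convex (convex_Icc a b) (right_mem_Icc.2 hab.le)]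
  ext u
  refine ⟨fun h => ?_, fun hu _ hy => mul_nonpos_of_nonneg_of_nonpos hu (sub_nonpos.2 hy.2)⟩
  have ha := h a (left_mem_Icc.2 hab.le)
  exact mem_Ici.2 (by nlinarith)

theorem normalConeR_Icc_of_mem_Ioo {x : ℝ} (hx : x ∈ Ioo a b) :
    normalConeR (Icc a b) x = {0} := by
  rw [normalConeR_eq_of_convex (convex_Icc a b) (Ioo_subset_Icc_self hx)]
  ext u
  refine ⟨fun h => ?_, fun hu _ _ => by simp [Set.mem_singleton_iff.1 hu]⟩
  obtain ⟨hax, hxb⟩ := hx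
  have hl := h a (left_mem_Icc.2 (hax.trans hxb).le)
  have hr := h b (right_mem_Icc.2 (hax.trans hxb).le)
  exact Set.mem_singleton_iff.2 (by nlinarith)

theorem firstOrderConditions_Icc_iff (hab : a < b) (B C C' : ℝ → ℝ) :
    (∀ x ∈ Icc a b, ∀ u ∈ normalConeR (Icc a b) x,
      C x * u = 0 ∧ u * (B x - (1/2 : ℝ) * C' x * (if C x ≠ 0 then (1:ℝ) else 0)) ≤ 0) ↔
    (C a = 0 ∧ C b = 0) ∧ 0 ≤ B a ∧ B b ≤ 0 := by
  have ha : a ∈ Icc a b := left_mem_Icc.2 hab.le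
  have hb : b ∈ Icc a b := right_mem_Icc.2 hab.le
  constructor
  · intro h
    obtain ⟨hCa, hBa⟩ := h a ha (-1) (by simp [normalConeR_Icc_left hab])
    obtain ⟨hCb, hBb⟩ := h b hb 1 (by simp [normalConeR_Icc_right hab])
    simp only [mul_neg, mul_one, neg_eq_zero] at hCa hCb
    simp only [hCa, hCb, ne_eq, not_true_eq_false, if_false, mul_zero, sub_zero] at hBa hBb
    exact ⟨⟨hCa, hCb⟩, by linarith, by linarith⟩
  · rintro ⟨⟨hCa, hCb⟩, hBa, hBb⟩ x hx u hu
    rcases eq_or_lt_of_le hx.1 with rfl | hax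
    · rw [normalConeR_Icc_left hab] at hu
      simp only [hCa, zero_mul, ne_eq, not_true_eq_false, if_false, mul_zero, sub_zero, true_and]
      exact mul_nonpos_of_nonpos_of_nonneg hu hBa
    rcases eq_or_lt_of_le hx.2 with rfl | hxb
    · rw [normalConeR_Icc_right hab] at hu
      simp only [hCb, zero_mul, ne_eq, not_true_eq_false, if_false, mul_zero, sub_zero, true_and]
      exact mul_nonpos_of_nonneg_of_nonpos hu hBb
    · rw [normalConeR_Icc_of_mem_Ioo ⟨hax, hxb⟩, Set.mem_singleton_iff] at hu
      simp [hu]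

end Icc

theorem quadratic_vanishing_at_zero_one_iff {c0 c1 c2 : ℝ} {C : ℝ → ℝ}
    (hC : ∀ x, C x = c0 + c1 * x + c2 * x ^ 2) (hhalf : 0 ≤ C (1/2)) :
    (C 0 = 0 ∧ C 1 = 0) ↔ ∃ η : ℝ, 0 ≤ η ∧ ∀ x, C x = η ^ 2 * (x * (1 - x)) := by
  constructor
  · rintro ⟨h0, h1⟩
    rw [hC] at h0 h1 hhalf
    have hc0 : c0 = 0 := by simpa using h0
    have hc2 : c2 = -c1 := by linarith
    have hc1 : 0 ≤ c1 := by nlinarith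
    exact ⟨√c1, Real.sqrt_nonneg _, fun x => by rw [hC, Real.sq_sqrt hc1, hc0, hc2]; ring⟩
  · rintro ⟨η, -, hη⟩
    simp [hη]

theorem affine_inward_at_zero_one_iff {b0 b1 : ℝ} {B : ℝ → ℝ} (hB : ∀ x, B x = b0 + b1 * x) :
    (0 ≤ B 0 ∧ B 1 ≤ 0) ↔ ∃ κ : ℝ, 0 ≤ κ ∧ ∃ θ ∈ Icc (0:ℝ) 1, ∀ x, B x = κ * (θ - x) := by
  constructor
  · rintro ⟨h0, h1⟩
    rw [hB] at h0 h1
    simp only [mul_zero, add_zero, mul_one] at h0 h1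
    -- for `b1 = 0` the junk value `b0 / 0 = 0` is harmless, since then `b0 = 0` as well
    refine ⟨-b1, by linarith, b0 / -b1,
      ⟨div_nonneg h0 (by linarith), div_le_one_of_le₀ (by linarith) (by linarith)⟩, fun x => ?_⟩
    rcases eq_or_ne b1 0 with hb1 | hb1
    · rw [hB, hb1, show b0 = 0 by linarith]
      ring
    · rw [hB, mul_sub, mul_div_cancel₀ _ (neg_ne_zero.2 hb1)]
      ring
  · rintro ⟨κ, hκ, θ, hθ, hBκ⟩
    rw [hBκ, hBκ, sub_zero]
    exact ⟨mul_nonneg hκ hθ.1, mul_nonpos_of_nonneg_of_nonpos hκ (by linarith [hθ.2])⟩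

/-- characterization of the first-order invariance conditions on `[0,1]`
for an affine drift and a quadratic diffusion coefficient: the Jacobi diffusion. -/
theorem stmt17 (b0 b1 : ℝ) (b : ℝ → ℝ) (hb : ∀ x : ℝ, b x = b0 + b1 * x)
    (c0 c1 c2 : ℝ) (C : ℝ → ℝ) (hC : ∀ x : ℝ, C x = c0 + c1 * x + c2 * x^2)
    (hCpos : ∀ x ∈ Set.Icc (0:ℝ) 1, 0 ≤ C x) :
    (∀ x ∈ Set.Icc (0:ℝ) 1, ∀ u ∈ normalConeR (Set.Icc (0:ℝ) 1) x,
      C x * u = 0 ∧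
      u * (b x - (1/2 : ℝ) * deriv C x * (if C x ≠ 0 then (1:ℝ) else 0)) ≤ 0)
    ↔
    (∃ η : ℝ, 0 ≤ η ∧ ∃ κ : ℝ, 0 ≤ κ ∧ ∃ θ ∈ Set.Icc (0:ℝ) 1,
      (∀ x : ℝ, C x = η^2 * (x * (1 - x))) ∧ (∀ x : ℝ, b x = κ * (θ - x))) := by
  rw [firstOrderConditions_Icc_iff zero_lt_one b C (deriv C),
    quadratic_vanishing_at_zero_one_iff hC (hCpos _ ⟨by norm_num, by norm_num⟩),
    affine_inward_at_zero_one_iff hb]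
  constructor
  · rintro ⟨⟨η, hη, hCη⟩, κ, hκ, θ, hθ, hbκ⟩
    exact ⟨η, hη, κ, hκ, θ, hθ, hCη, hbκ⟩
  · rintro ⟨η, hη, κ, hκ, θ, hθ, hCη, hbκ⟩
    exact ⟨⟨η, hη, hCη⟩, κ, hκ, θ, hθ, hbκ⟩
end
end
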